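/- arXiv:1812.05925 — 2 statements merged into one kernel-verified Lean document; each statement's English description precedes it below -/
import Mathlib

section
/- A Tychonoff space X is Lindelöf if and only if every 1-dense subset of C_p(X) contains a countable 1-dense subset. -/
open Set Filter Topology TopologicalSpace

universe u

/-- The selection principle `S₁(A, B)`: for each sequence of members of `A` one can pick one
element from each so that the chosen elements form a member of `B`. -/
def S1 {Z : Type*} (A B : Set (Set Z)) : Prop :=
  ∀ f : ℕ → Set Z, (∀ n, f n ∈ A) →
    ∃ b : ℕ → Z, (∀ n, b n ∈ f n) ∧ Set.range b ∈ B

/-- The selection principle `S_fin(A, B)`: for each sequence of members of `A` one can pick a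
finite subset of each so that the union of the chosen finite sets is a member of `B`. -/
def Sfin {Z : Type*} (A B : Set (Set Z)) : Prop :=
  ∀ f : ℕ → Set Z, (∀ n, f n ∈ A) →
    ∃ F : ℕ → Set Z, (∀ n, F n ⊆ f n ∧ (F n).Finite) ∧ (⋃ n, F n) ∈ B

/-- The selection principle `U_fin(A, B)` for families of covers of a space `Y`. -/
def Ufin {Y : Type*} (A B : Set (Set (Set Y))) : Prop :=
  ∀ U : ℕ → Set (Set Y), (∀ n, U n ∈ A) →
    (∀ n, ¬ ∃ F, F ⊆ U n ∧ F.Finite ∧ ⋃₀ F = Set.univ) →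
    ∃ F : ℕ → Set (Set Y), (∀ n, F n ⊆ U n ∧ (F n).Finite) ∧
      {V | ∃ n, V = ⋃₀ F n} ∈ B

/-- A zero-set: the preimage of `0` under a continuous real-valued function. -/
def ZeroSet {Y : Type*} [TopologicalSpace Y] (s : Set Y) : Prop :=
  ∃ g : Y → ℝ, Continuous g ∧ s = g ⁻¹' {0}

/-- A cozero set: the complement of a zero-set. -/
def Cozero {Y : Type*} [TopologicalSpace Y] (s : Set Y) : Prop := ZeroSet sᶜ

/-- A `Z_σ`-set: a countable union of zero-sets. -/
def ZsigmaSet {Y : Type*} [TopologicalSpace Y] (s : Set Y) : Prop :=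
  ∃ S : Set (Set Y), S.Countable ∧ (∀ t ∈ S, ZeroSet t) ∧ ⋃₀ S = s

/-- A `z`-space: the complement of every `Z_σ`-set is a `Z_σ`-set. -/
def ZSpace (Y : Type*) [TopologicalSpace Y] : Prop :=
  ∀ s : Set Y, ZsigmaSet s → ZsigmaSet sᶜ

/-- An `F_σ`-set: a countable union of closed sets. -/
def IsFsigma {Y : Type*} [TopologicalSpace Y] (s : Set Y) : Prop :=
  ∃ S : Set (Set Y), S.Countable ∧ (∀ t ∈ S, IsClosed t) ∧ ⋃₀ S = s

/-- An ω-cover (nontrivial: the whole space is not a member): every finite subset of the space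
is contained in some member. -/
def IsOmegaCover {Y : Type*} (𝒰 : Set (Set Y)) : Prop :=
  Set.univ ∉ 𝒰 ∧ ∀ F : Set Y, F.Finite → ∃ U ∈ 𝒰, F ⊆ U

/-- A γ-cover (nontrivial): infinite, and every point belongs to all but finitely many members. -/
def IsGammaCover {Y : Type*} (𝒰 : Set (Set Y)) : Prop :=
  𝒰.Infinite ∧ Set.univ ∉ 𝒰 ∧ ∀ y : Y, {U ∈ 𝒰 | y ∉ U}.Finite

/-- `𝒪`: the family of all (nontrivial) open covers. -/
def openCovers (Y : Type*) [TopologicalSpace Y] : Set (Set (Set Y)) :=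
  {𝒰 | (∀ U ∈ 𝒰, IsOpen U) ∧ ⋃₀ 𝒰 = Set.univ ∧ Set.univ ∉ 𝒰}

/-- `𝒪^ω_cz`: the family of all countable covers by cozero sets. -/
def ctblCozeroCovers (Y : Type*) [TopologicalSpace Y] : Set (Set (Set Y)) :=
  {𝒰 | 𝒰.Countable ∧ (∀ U ∈ 𝒰, Cozero U) ∧ ⋃₀ 𝒰 = Set.univ ∧ Set.univ ∉ 𝒰}

/-- `Ω`: the family of all open ω-covers. -/
def omegaCovers (Y : Type*) [TopologicalSpace Y] : Set (Set (Set Y)) :=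
  {𝒰 | (∀ U ∈ 𝒰, IsOpen U) ∧ IsOmegaCover 𝒰}

/-- `Ω^ω_cz`: the family of all countable ω-covers consisting of cozero sets. -/
def ctblCozeroOmegaCovers (Y : Type*) [TopologicalSpace Y] : Set (Set (Set Y)) :=
  {𝒰 | 𝒰.Countable ∧ (∀ U ∈ 𝒰, Cozero U) ∧ IsOmegaCover 𝒰}

/-- `Γ`: the family of all open γ-covers. -/
def gammaCovers (Y : Type*) [TopologicalSpace Y] : Set (Set (Set Y)) :=
  {𝒰 | (∀ U ∈ 𝒰, IsOpen U) ∧ IsGammaCover 𝒰}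

/-- `Γ_cz`: the family of all γ-covers consisting of cozero sets. -/
def cozeroGammaCovers (Y : Type*) [TopologicalSpace Y] : Set (Set (Set Y)) :=
  {𝒰 | (∀ U ∈ 𝒰, Cozero U) ∧ IsGammaCover 𝒰}

/-- `Γ_F`: γ-covers by cozero sets admitting a γ-cover shrinking consisting of zero-sets. -/
def gammaFCovers (Y : Type*) [TopologicalSpace Y] : Set (Set (Set Y)) :=
  {𝒰 | (∀ U ∈ 𝒰, Cozero U) ∧ IsGammaCover 𝒰 ∧
    ∃ F : Set Y → Set Y, (∀ U ∈ 𝒰, ZeroSet (F U) ∧ F U ⊆ U) ∧ IsGammaCover (F '' 𝒰)}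

/-- `C_p(X)`: continuous real-valued functions on `X` with the topology of pointwise
convergence (the subspace topology inherited from the product topology on `X → ℝ`). -/
abbrev Cp (X : Type u) [TopologicalSpace X] : Type u := {f : X → ℝ // Continuous f}

/-- The constant zero function `𝟎 ∈ C_p(X)`. -/
def zeroF (X : Type u) [TopologicalSpace X] : Cp X := ⟨fun _ => (0 : ℝ), continuous_const⟩

/-- A `1`-dense subset of `C_p(X)`. -/
def OneDense {X : Type u} [TopologicalSpace X] (A : Set (Cp X)) : Prop :=
  ∀ x : X, ∀ W : Set ℝ, IsOpen W → W.Nonempty → ∃ f ∈ A, f.1 x ∈ W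

/-- A subset of `C_p(X)` that is `1`-dense at the point `𝟎`. -/
def OneDenseAtZero {X : Type u} [TopologicalSpace X] (A : Set (Cp X)) : Prop :=
  ∀ x : X, ∀ ε : ℝ, 0 < ε → ∃ h ∈ A, |h.1 x| < ε

/-- `𝒟[1]`: the family of `1`-dense subsets of `C_p(X)`. -/
def D1 (X : Type u) [TopologicalSpace X] : Set (Set (Cp X)) := {A | OneDense A}

/-- `𝒟^ω[1]`: the family of countable `1`-dense subsets of `C_p(X)`. -/
def D1ct (X : Type u) [TopologicalSpace X] : Set (Set (Cp X)) :=
  {A | A.Countable ∧ OneDense A}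

/-- `𝒟_𝟎[1]`: the family of subsets of `C_p(X)` that are `1`-dense at `𝟎`. -/
def D01 (X : Type u) [TopologicalSpace X] : Set (Set (Cp X)) := {A | OneDenseAtZero A}

/-- `𝒟^ω_𝟎[1]`: the countable members of `𝒟_𝟎[1]`. -/
def D01ct (X : Type u) [TopologicalSpace X] : Set (Set (Cp X)) :=
  {A | A.Countable ∧ OneDenseAtZero A}

/-- `𝒟`: the family of dense subsets of `C_p(X)`. -/
def denseFam (X : Type u) [TopologicalSpace X] : Set (Set (Cp X)) := {A | Dense A}

/-- `𝒟^ω`: the family of countable dense subsets of `C_p(X)`. -/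
def ctblDenseFam (X : Type u) [TopologicalSpace X] : Set (Set (Cp X)) :=
  {A | A.Countable ∧ Dense A}

/-- A sequentially dense subset of `C_p(X)`. -/
def SeqDense {X : Type u} [TopologicalSpace X] (D : Set (Cp X)) : Prop :=
  ∀ f : Cp X, ∃ u : ℕ → Cp X, (∀ n, u n ∈ D) ∧ Filter.Tendsto u Filter.atTop (nhds f)

/-- `𝒮`: the family of sequentially dense subsets of `C_p(X)`. -/
def seqDenseFam (X : Type u) [TopologicalSpace X] : Set (Set (Cp X)) := {D | SeqDense D}

/-- `Γ_𝟎`: infinite sets `A ⊆ C_p(X)` with `𝟎 ∉ A` such that every neighborhood of `𝟎`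
contains all but finitely many elements of `A`. -/
def Gamma0 (X : Type u) [TopologicalSpace X] : Set (Set (Cp X)) :=
  {A | A.Infinite ∧ zeroF X ∉ A ∧ ∀ N ∈ nhds (zeroF X), {f ∈ A | f ∉ N}.Finite}

/-- `Ω_𝟎`: sets `A ⊆ C_p(X)` with `𝟎 ∈ cl(A) \ A`. -/
def Omega0 (X : Type u) [TopologicalSpace X] : Set (Set (Cp X)) :=
  {A | zeroF X ∈ closure A \ A}

/-- `Ω^ω_𝟎`: the countable members of `Ω_𝟎`. -/
def Omega0ct (X : Type u) [TopologicalSpace X] : Set (Set (Cp X)) :=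
  {A | A.Countable ∧ zeroF X ∈ closure A \ A}

/-- `X` is projectively `P` if every second countable continuous image of `X` satisfies `P`. -/
def Projectively (X : Type u) [TopologicalSpace X]
    (P : (Y : Type u) → [TopologicalSpace Y] → Prop) : Prop :=
  ∀ (Y : Type u) [TopologicalSpace Y] [SecondCountableTopology Y]
    (f : X → Y), Continuous f → Function.Surjective f → P Y

/-- The Rothberger property `S₁(𝒪, 𝒪)`. -/
def RothbergerSp (Y : Type u) [TopologicalSpace Y] : Prop := S1 (openCovers Y) (openCovers Y)

/-- The Menger property `S_fin(𝒪, 𝒪)`. -/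
def MengerSp (Y : Type u) [TopologicalSpace Y] : Prop := Sfin (openCovers Y) (openCovers Y)

/-- The Hurewicz property `U_fin(𝒪, Γ)`. -/
def HurewiczSp (Y : Type u) [TopologicalSpace Y] : Prop := Ufin (openCovers Y) (gammaCovers Y)

/-- The Gerlits–Nagy property `S₁(Ω, Γ)`. -/
def S1OmegaGammaSp (Y : Type u) [TopologicalSpace Y] : Prop :=
  S1 (omegaCovers Y) (gammaCovers Y)

/-- The property `S₁(Ω, Ω)`. -/
def S1OmegaOmegaSp (Y : Type u) [TopologicalSpace Y] : Prop :=
  S1 (omegaCovers Y) (omegaCovers Y)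

/-- The property `S_fin(Ω, Ω)`. -/
def SfinOmegaOmegaSp (Y : Type u) [TopologicalSpace Y] : Prop :=
  Sfin (omegaCovers Y) (omegaCovers Y)

/-- The property `S₁(Γ, Ω)`. -/
def S1GammaOmegaSp (Y : Type u) [TopologicalSpace Y] : Prop :=
  S1 (gammaCovers Y) (omegaCovers Y)

/-- The property `S_fin(Γ, Ω)`. -/
def SfinGammaOmegaSp (Y : Type u) [TopologicalSpace Y] : Prop :=
  Sfin (gammaCovers Y) (omegaCovers Y)

/-- The property `U_fin(𝒪, Ω)`. -/
def UfinOOmegaSp (Y : Type u) [TopologicalSpace Y] : Prop :=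
  Ufin (openCovers Y) (omegaCovers Y)

/-- The property `S₁(Γ, 𝒪)`. -/
def S1GammaOSp (Y : Type u) [TopologicalSpace Y] : Prop :=
  S1 (gammaCovers Y) (openCovers Y)

/-- The property `S₁(Γ, Γ)`. -/
def S1GammaGammaSp (Y : Type u) [TopologicalSpace Y] : Prop :=
  S1 (gammaCovers Y) (gammaCovers Y)

/-- The property `S_fin(Γ, Γ)`. -/
def SfinGammaGammaSp (Y : Type u) [TopologicalSpace Y] : Prop :=
  Sfin (gammaCovers Y) (gammaCovers Y)

/-- Auxiliary predicate for the `V`-property with an explicit witness. -/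
def VPropertyWitness (X : Type u) [TopologicalSpace X] (Y : Type u) [TopologicalSpace Y]
    (f : X → Y) : Prop :=
  MetrizableSpace Y ∧ SeparableSpace Y ∧ Continuous f ∧ Function.Bijective f ∧
    ∀ U : Set X, Cozero U → IsFsigma (f '' U)

/-- The `V`-property: there is a continuous bijection onto a separable metrizable space taking
cozero sets to `F_σ`-sets. -/
def VProperty (X : Type u) [TopologicalSpace X] : Prop :=
  ∃ (Y : Type u) (tY : TopologicalSpace Y) (f : X → Y), @VPropertyWitness X _ Y tY f

/-- `X` admits a coarser second countable topology. -/
def HasCoarserSecondCountableTopology (X : Type u) [TopologicalSpace X] : Prop :=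
  ∃ t' : TopologicalSpace X, @SecondCountableTopology X t' ∧
    ∀ s : Set X, IsOpen[t'] s → IsOpen s

/-!
If `X` is Lindelöf and `A` is 1-dense, then for each rational interval `I` the sets `f⁻¹(I)`,
`f ∈ A`, cover `X`; countable subcovers for the countably many rational intervals give a countable
1-dense subset of `A`. Conversely, given an open cover `𝒰`, complete regularity makes the functions
supported in a single member of `𝒰` a 1-dense set. A countable 1-dense subset of it takes a positive
value at every point, so members of `𝒰` containing the supports of its elements form a countable
subcover.
-/

theorem lindelofSpace_iff_countable_sUnion_subcover (X : Type u) [TopologicalSpace X] :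
    LindelofSpace X ↔ ∀ 𝒰 : Set (Set X), (∀ U ∈ 𝒰, IsOpen U) → ⋃₀ 𝒰 = univ →
      ∃ 𝒱 ⊆ 𝒰, 𝒱.Countable ∧ ⋃₀ 𝒱 = univ := by
  refine ⟨fun _ 𝒰 hopen hcov => ?_, fun h => ⟨isLindelof_of_countable_subcover fun U hU hcov => ?_⟩⟩
  · obtain ⟨𝒱, h𝒱𝒰, h𝒱c, h𝒱cov⟩ := isLindelof_univ.elim_countable_subcover_image (c := id)
      hopen (by simpa [← sUnion_eq_biUnion] using hcov.ge)
    exact ⟨𝒱, h𝒱𝒰, h𝒱c, univ_subset_iff.1 (by simpa [← sUnion_eq_biUnion] using h𝒱cov)⟩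
  · obtain ⟨𝒱, h𝒱U, h𝒱c, h𝒱cov⟩ := h (range U) (forall_mem_range.2 hU)
      (by rwa [sUnion_range, ← univ_subset_iff])
    obtain ⟨t, rfl, hinj⟩ := exists_image_eq_injOn_of_subset_range h𝒱U
    refine ⟨t, countable_of_injective_of_countable_image hinj h𝒱c, ?_⟩
    rw [← sUnion_image, h𝒱cov]

theorem exists_countable_subset_forall_apply_mem {X : Type u} [TopologicalSpace X]
    [LindelofSpace X] {A : Set (Cp X)} {W : Set ℝ} (hW : IsOpen W)
    (hA : ∀ x, ∃ f ∈ A, f.1 x ∈ W) : ∃ B ⊆ A, B.Countable ∧ ∀ x, ∃ f ∈ B, f.1 x ∈ W := by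
  obtain ⟨B, hBA, hBc, hBcov⟩ := isLindelof_univ.elim_countable_subcover_image
    (c := fun f : Cp X => f.1 ⁻¹' W) (fun f _ => hW.preimage f.2)
    (fun x _ => by simpa using hA x)
  exact ⟨B, hBA, hBc, fun x => by simpa using hBcov (mem_univ x)⟩

theorem oneDense_of_forall_rat_Ioo {X : Type u} [TopologicalSpace X] {A : Set (Cp X)}
    (hA : ∀ a b : ℚ, a < b → ∀ x, ∃ f ∈ A, f.1 x ∈ Ioo (a : ℝ) b) : OneDense A := by
  rintro x W hW ⟨r, hr⟩
  obtain ⟨I, hI, hrI, hIW⟩ := Real.isTopologicalBasis_Ioo_rat.exists_subset_of_mem_open hr hW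
  simp only [mem_iUnion, mem_singleton_iff] at hI
  obtain ⟨a, b, hab, rfl⟩ := hI
  obtain ⟨f, hfA, hfx⟩ := hA a b hab x
  exact ⟨f, hfA, hIW hfx⟩

theorem OneDense.exists_countable_subset {X : Type u} [TopologicalSpace X] [LindelofSpace X]
    {A : Set (Cp X)} (hA : OneDense A) : ∃ B ⊆ A, B.Countable ∧ OneDense B := by
  have hIoo : ∀ a b : ℚ, a < b → ∃ B ⊆ A, B.Countable ∧ ∀ x, ∃ f ∈ B, f.1 x ∈ Ioo (a : ℝ) b :=
    fun a b hab => exists_countable_subset_forall_apply_mem isOpen_Ioo fun x =>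
      hA x _ isOpen_Ioo (nonempty_Ioo.2 (Rat.cast_lt.2 hab))
  choose! B hBA hBc hB using hIoo
  refine ⟨⋃ (a : ℚ) (b : ℚ) (_ : a < b), B a b, ?_, ?_, ?_⟩
  · exact iUnion₂_subset fun a b => iUnion_subset (hBA a b)
  · exact countable_iUnion fun a => countable_iUnion fun b => countable_iUnion (hBc a b)
  · refine oneDense_of_forall_rat_Ioo fun a b hab x => ?_
    obtain ⟨f, hfB, hfx⟩ := hB a b hab x
    exact ⟨f, mem_iUnion.2 ⟨a, mem_iUnion.2 ⟨b, mem_iUnion.2 ⟨hab, hfB⟩⟩⟩, hfx⟩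

theorem oneDense_setOf_support_subset {X : Type u} [TopologicalSpace X] [CompletelyRegularSpace X]
    {𝒰 : Set (Set X)} (hopen : ∀ U ∈ 𝒰, IsOpen U) (hcov : ⋃₀ 𝒰 = univ) :
    OneDense {f : Cp X | ∃ U ∈ 𝒰, Function.support f.1 ⊆ U} := by
  rintro x W - ⟨r, hr⟩
  obtain ⟨U, hU𝒰, hxU⟩ := hcov.ge (mem_univ x)
  obtain ⟨g, hgc, hgx, hgU⟩ := CompletelyRegularSpace.completely_regular x Uᶜ
    (hopen U hU𝒰).isClosed_compl (notMem_compl_iff.2 hxU)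
  refine ⟨⟨fun y => r * (1 - (g y : ℝ)), by fun_prop⟩, ⟨U, hU𝒰, ?_⟩, ?_⟩
  · refine Function.support_subset_iff'.2 fun y hy => ?_
    simp [hgU hy]
  · simpa [hgx] using hr

theorem lindelofSpace_of_forall_oneDense_exists_countable {X : Type u} [TopologicalSpace X]
    [CompletelyRegularSpace X]
    (h : ∀ A : Set (Cp X), OneDense A → ∃ B ⊆ A, B.Countable ∧ OneDense B) : LindelofSpace X := by
  rw [lindelofSpace_iff_countable_sUnion_subcover]
  intro 𝒰 hopen hcov
  obtain ⟨B, hBA, hBc, hB⟩ := h _ (oneDense_setOf_support_subset hopen hcov)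
  have hBsupp : ∀ f ∈ B, ∃ U ∈ 𝒰, Function.support f.1 ⊆ U := hBA
  choose! U hU𝒰 hsupp using hBsupp
  refine ⟨U '' B, image_subset_iff.2 hU𝒰, hBc.image U, eq_univ_of_forall fun x => ?_⟩
  obtain ⟨f, hfB, hfx⟩ := hB x (Ioi 0) isOpen_Ioi ⟨1, mem_Ioi.2 one_pos⟩
  exact ⟨U f, mem_image_of_mem U hfB, hsupp f hfB (Function.mem_support.2 (ne_of_gt hfx))⟩

/-- A Tychonoff space `X` is Lindelöf iff every `1`-dense subset of `C_p(X)`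
contains a countable `1`-dense subset. -/
theorem statement1 (X : Type u) [TopologicalSpace X] [T35Space X] :
    (∀ 𝒰 : Set (Set X), (∀ U ∈ 𝒰, IsOpen U) → ⋃₀ 𝒰 = Set.univ →
      ∃ 𝒱 ⊆ 𝒰, 𝒱.Countable ∧ ⋃₀ 𝒱 = Set.univ) ↔
    (∀ A : Set (Cp X), OneDense A → ∃ B ⊆ A, B.Countable ∧ OneDense B) := by
  rw [← lindelofSpace_iff_countable_sUnion_subcover]
  exact ⟨fun _ _ hA => hA.exists_countable_subset,
    lindelofSpace_of_forall_oneDense_exists_countable⟩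
end

section
/- For a Tychonoff space X, C_p(X) satisfies S₁(𝒟[1], 𝒟[1]) if and only if C_p(X) satisfies S₁(𝒟^ω[1], 𝒟[1]) and every 1-dense subset of C_p(X) contains a countable 1-dense subset. -/
open Set Filter Topology TopologicalSpace

universe u

namespace S1

variable {Z : Type*} {A A' B : Set (Set Z)}

theorem mono_left (hA : A' ⊆ A) (h : S1 A B) : S1 A' B :=
  fun f hf => h f fun n => hA (hf n)

theorem of_forall_exists_subset (hA : ∀ a ∈ A, ∃ a' ∈ A', a' ⊆ a) (h : S1 A' B) : S1 A B := by
  intro f hf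
  choose f' hf' hf'f using fun n => hA (f n) (hf n)
  obtain ⟨b, hb, hrange⟩ := h f' hf'
  exact ⟨b, fun n => hf'f n (hb n), hrange⟩

theorem exists_countable_subset_mem (h : S1 A B) {a : Set Z} (ha : a ∈ A) :
    ∃ b ⊆ a, b.Countable ∧ b ∈ B := by
  obtain ⟨b, hb, hrange⟩ := h (fun _ => a) fun _ => ha
  exact ⟨range b, range_subset_iff.2 hb, countable_range b, hrange⟩

end S1

theorem statement2_general (X : Type u) [TopologicalSpace X] :
    S1 (D1 X) (D1 X) ↔
      (S1 (D1ct X) (D1 X) ∧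
        ∀ A : Set (Cp X), OneDense A → ∃ B ⊆ A, B.Countable ∧ OneDense B) := by
  constructor
  · intro h
    exact ⟨h.mono_left fun A hA => hA.2, fun A hA => h.exists_countable_subset_mem hA⟩
  · rintro ⟨hct, hsub⟩
    refine hct.of_forall_exists_subset fun A hA => ?_
    obtain ⟨B, hBA, hBct, hB⟩ := hsub A hA
    exact ⟨B, ⟨hBct, hB⟩, hBA⟩

/-- `C_p(X)` satisfies `S₁(𝒟[1], 𝒟[1])` iff `C_p(X)` satisfies
`S₁(𝒟^ω[1], 𝒟[1])` and every `1`-dense subset of `C_p(X)` contains a countable `1`-dense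
subset. -/
theorem statement2 (X : Type u) [TopologicalSpace X] [T35Space X] :
    S1 (D1 X) (D1 X) ↔
      (S1 (D1ct X) (D1 X) ∧
        ∀ A : Set (Cp X), OneDense A → ∃ B ⊆ A, B.Countable ∧ OneDense B) :=
  statement2_general X
end
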